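/- arXiv:math/0005131 — 4 statements merged into one kernel-verified Lean document; each statement's English description precedes it below -/
import Mathlib

section
/- In a distributive lattice L, if C is a maximal chain in L and x ≺ y is a covering in L, then the number of coverings u ≺ v in C that are projectively equivalent to x ≺ y is 0 or 1. -/
universe u v

/-- `(p.1, p.2)` transposes up to `(q.1, q.2)`. -/
def TransUp {β : Type v} [Lattice β] (p q : β × β) : Prop :=
  p.1 ≤ p.2 ∧ q.1 ≤ q.2 ∧ p.2 ⊓ q.1 = p.1 ∧ p.2 ⊔ q.1 = q.2

/-- Projective equivalence: symmetric transitive closure of the transposes-up relation. -/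
def ProjEquiv {β : Type v} [Lattice β] : β × β → β × β → Prop :=
  Relation.EqvGen TransUp

/-- The set of coverings in a chain `C` that are projectively equivalent to `(x, y)`. -/
def CovIn {β : Type v} [Lattice β] (C : Set β) (x y : β) : Set (β × β) :=
  {p | p.1 ∈ C ∧ p.2 ∈ C ∧ p.1 ⋖ p.2 ∧ ProjEquiv p (x, y)}

/-- The invariant: the pair is collapsed by the congruence `a ↦ (a ⊔ d, a ⊓ c)`. -/
def PRel {α : Type u} [DistribLattice α] (c d : α) (p : α × α) : Prop :=
  p.1 ⊔ d = p.2 ⊔ d ∧ p.1 ⊓ c = p.2 ⊓ c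

lemma transUp_pres {α : Type u} [DistribLattice α] (c d : α) {p q : α × α}
    (h : TransUp p q) : PRel c d p ↔ PRel c d q := by
  obtain ⟨h1, h2, hm, hj⟩ := h
  have hp1q1 : p.1 ≤ q.1 := hm ▸ inf_le_right
  have hp2q2 : p.2 ≤ q.2 := hj ▸ le_sup_left
  constructor
  · rintro ⟨e1, e2⟩
    constructor
    · calc q.1 ⊔ d = (p.1 ⊔ q.1) ⊔ d := by rw [sup_eq_right.mpr hp1q1]
        _ = (p.1 ⊔ d) ⊔ q.1 := by rw [sup_right_comm]
        _ = (p.2 ⊔ d) ⊔ q.1 := by rw [e1]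
        _ = (p.2 ⊔ q.1) ⊔ d := by rw [sup_right_comm]
        _ = q.2 ⊔ d := by rw [hj]
    · calc q.1 ⊓ c = (p.1 ⊔ q.1) ⊓ c := by rw [sup_eq_right.mpr hp1q1]
        _ = (p.1 ⊓ c) ⊔ (q.1 ⊓ c) := by rw [inf_sup_right]
        _ = (p.2 ⊓ c) ⊔ (q.1 ⊓ c) := by rw [e2]
        _ = (p.2 ⊔ q.1) ⊓ c := by rw [inf_sup_right]
        _ = q.2 ⊓ c := by rw [hj]
  · rintro ⟨e1, e2⟩
    constructor
    · calc p.1 ⊔ d = (p.2 ⊓ q.1) ⊔ d := by rw [hm]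
        _ = (p.2 ⊔ d) ⊓ (q.1 ⊔ d) := by rw [sup_inf_right]
        _ = (p.2 ⊔ d) ⊓ (q.2 ⊔ d) := by rw [e1]
        _ = (p.2 ⊓ q.2) ⊔ d := by rw [sup_inf_right]
        _ = p.2 ⊔ d := by rw [inf_eq_left.mpr hp2q2]
    · calc p.1 ⊓ c = (p.2 ⊓ q.1) ⊓ c := by rw [hm]
        _ = p.2 ⊓ (q.1 ⊓ c) := by rw [inf_assoc]
        _ = p.2 ⊓ (q.2 ⊓ c) := by rw [e2]
        _ = (p.2 ⊓ q.2) ⊓ c := by rw [inf_assoc]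
        _ = p.2 ⊓ c := by rw [inf_eq_left.mpr hp2q2]

lemma projEquiv_pres {α : Type u} [DistribLattice α] (c d : α) {p q : α × α}
    (h : ProjEquiv p q) : PRel c d p ↔ PRel c d q := by
  induction h with
  | rel _ _ h => exact transUp_pres c d h
  | refl _ => rfl
  | symm _ _ _ ih => exact ih.symm
  | trans _ _ _ _ _ ih1 ih2 => exact ih1.trans ih2

/-- If two projectively equivalent coverings lie on a chain with one below the other,
we get a contradiction. -/
lemma no_two {α : Type u} [DistribLattice α] {p q : α × α}
    (hp : p.1 ⋖ p.2) (hq : q.1 ⋖ q.2) (hle : p.2 ≤ q.1) (h : ProjEquiv p q) : False := by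
  have hq' : PRel q.1 q.2 q := ⟨by simp [sup_eq_right.mpr hq.le], by simp [inf_eq_right.mpr hq.le]⟩
  have hp' : PRel q.1 q.2 p := (projEquiv_pres q.1 q.2 h).mpr hq'
  have h1 : p.1 ⊓ q.1 = p.1 := inf_eq_left.mpr (hp.le.trans hle)
  have h2 : p.2 ⊓ q.1 = p.2 := inf_eq_left.mpr hle
  exact hp.ne (by rw [← h1, ← h2, hp'.2])

theorem stmt0 {α : Type u} [DistribLattice α] (C : Set α)
    (hC : IsMaxChain (· ≤ ·) C) (x y : α) (hxy : x ⋖ y) :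
    (CovIn C x y).Subsingleton := by
  rintro p ⟨hp1, hp2, hpc, hpe⟩ q ⟨hq1, hq2, hqc, hqe⟩
  have hpq : ProjEquiv p q := Relation.EqvGen.trans _ _ _ hpe (Relation.EqvGen.symm _ _ hqe)
  have hch := hC.1
  -- coverings on a chain: compare p.1 and q.1
  rcases eq_or_ne p q with h | hne
  · exact h
  -- compare first components
  rcases eq_or_ne p.1 q.1 with h1 | h1
  · -- then p.2 = q.2 since both cover p.1 and are comparable
    have hcomp : p.2 ≤ q.2 ∨ q.2 ≤ p.2 := by
      rcases eq_or_ne p.2 q.2 with h | h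
      · exact Or.inl h.le
      · exact (hch hp2 hq2 h).imp id id
    have ha : q.1 < p.2 := lt_of_le_of_lt h1.ge hpc.lt
    have hb : p.1 < q.2 := lt_of_le_of_lt h1.le hqc.lt
    have h2 : p.2 = q.2 := by
      rcases hcomp with h | h
      · rcases h.lt_or_eq with hl | he
        · exact absurd hl (hqc.2 ha)
        · exact he
      · rcases h.lt_or_eq with hl | he
        · exact absurd hl (hpc.2 hb)
        · exact he.symm
    exact Prod.ext h1 h2
  · have hcomp : p.1 < q.1 ∨ q.1 < p.1 := (hch hp1 hq1 h1).imp (lt_of_le_of_ne · h1) (lt_of_le_of_ne · h1.symm)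
    rcases hcomp with h | h
    · -- p.2 ≤ q.1
      have : p.2 ≤ q.1 := by
        rcases eq_or_ne p.2 q.1 with he | he
        · exact he.le
        rcases hch hp2 hq1 he with hl | hl
        · exact hl
        · exact absurd (lt_of_le_of_ne hl he.symm) (hpc.2 h)
      exact (no_two hpc hqc this hpq).elim
    · have : q.2 ≤ p.1 := by
        rcases eq_or_ne q.2 p.1 with he | he
        · exact he.le
        rcases hch hq2 hp1 he with hl | hl
        · exact hl
        · exact absurd (lt_of_le_of_ne hl he.symm) (hqc.2 h)
      exact (no_two hqc hpc this (Relation.EqvGen.symm _ _ hpq)).elim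
end

section
/- In a distributive lattice, if u ≺ v transposes up to z ≺ w and u' ≺ v' transposes up to z ≺ w, then u ∧ u' ≺ v ∧ v', and (u ∧ u', v ∧ v') transposes up to (u, v) and also up to (u', v'). -/
universe u v

theorem stmt1 {α : Type u} [DistribLattice α] (u v u' v' z w : α)
    (huv : u ⋖ v) (huv' : u' ⋖ v') (hzw : z ⋖ w)
    (h1 : TransUp (u, v) (z, w)) (h2 : TransUp (u', v') (z, w)) :
    (u ⊓ u') ⋖ (v ⊓ v') ∧ TransUp (u ⊓ u', v ⊓ v') (u, v) ∧
      TransUp (u ⊓ u', v ⊓ v') (u', v') := by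
  obtain ⟨huvle, hzwle, hu, hw⟩ := h1
  obtain ⟨huvle', _, hu', hw'⟩ := h2
  simp only at hu hw hu' hw'
  have key : u ⊓ u' = v ⊓ v' ⊓ z := by
    rw [← hu, ← hu']; simp [inf_assoc, inf_comm, inf_left_comm]
  have meet_u : (v ⊓ v') ⊓ u = u ⊓ u' := by
    rw [key, ← hu]; simp [inf_assoc, inf_comm, inf_left_comm]
  have meet_u' : (v ⊓ v') ⊓ u' = u ⊓ u' := by
    rw [key, ← hu']; simp [inf_assoc, inf_comm, inf_left_comm]
  have mix1 : u ⊓ v' = u ⊓ u' := by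
    rw [key, ← hu]; simp [inf_assoc, inf_comm, inf_left_comm]
  have mix2 : v ⊓ u' = u ⊓ u' := by
    rw [key, ← hu']; simp [inf_assoc, inf_comm, inf_left_comm]
  have join_u : (v ⊓ v') ⊔ u = v := by
    rw [← hu, ← inf_sup_left]
    rw [hw', inf_eq_left]
    calc v ≤ v ⊔ z := le_sup_left
    _ = w := hw
  have join_u' : (v ⊓ v') ⊔ u' = v' := by
    rw [← hu', inf_comm v v', ← inf_sup_left, hw, inf_eq_left]
    calc v' ≤ v' ⊔ z := le_sup_left
    _ = w := hw'
  have hle : u ⊓ u' ≤ v ⊓ v' := inf_le_inf huvle huvle'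
  have hne : u ⊓ u' ≠ v ⊓ v' := by
    intro h
    have : u = v := by
      have := join_u
      rw [← h, sup_eq_right.mpr inf_le_left] at this
      exact this
    exact huv.ne this
  refine ⟨⟨lt_of_le_of_ne hle hne, ?_⟩, ⟨hle, huvle, meet_u, join_u⟩,
    ⟨hle, huvle', meet_u', join_u'⟩⟩
  intro t ht1 ht2
  have ht : t = (t ⊔ u) ⊓ (t ⊔ u') := by
    rw [← sup_inf_left, sup_eq_left.mpr ht1.le]
  have hcu : t ⊔ u = u ∨ t ⊔ u = v :=
    huv.eq_or_eq le_sup_right (sup_le (ht2.le.trans inf_le_left) huvle)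
  have hcu' : t ⊔ u' = u' ∨ t ⊔ u' = v' :=
    huv'.eq_or_eq le_sup_right (sup_le (ht2.le.trans inf_le_right) huvle')
  rcases hcu with h | h <;> rcases hcu' with h' | h' <;> rw [h, h'] at ht
  · exact ht1.ne' ht
  · rw [mix1] at ht; exact ht1.ne' ht
  · rw [mix2] at ht; exact ht1.ne' ht
  · exact ht2.ne ht
end

section
/- In a complete modular lattice L, if a covering x ≺ y is weakly regular with finite multiplicity, then x ≺ y is regular. -/
universe u v

/-- Meet-continuity: `a ⊓ ⋁ D = ⋁_{d ∈ D} (a ⊓ d)` for upward-directed `D`. -/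
def MeetContinuous (β : Type v) [CompleteLattice β] : Prop :=
  ∀ (a : β) (D : Set β), DirectedOn (· ≤ ·) D → a ⊓ sSup D = ⨆ d ∈ D, a ⊓ d

/-- Upper regularity of a covering `x ⋖ y`. -/
def UpperRegular {β : Type v} [CompleteLattice β] (x y : β) : Prop :=
  ∀ (I : Type v) [LinearOrder I] [Nonempty I] (f g : I → β),
    (∀ i, f i ⋖ g i) →
    (∀ i, ProjEquiv (f i, g i) (x, y)) →
    (∀ i j : I, i < j → TransUp (f i, g i) (f j, g j)) →
    (⨆ i, f i) ⋖ (⨆ i, g i)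

/-- Lower regularity of a covering `x ⋖ y` (the dual of upper regularity). -/
def LowerRegular {β : Type v} [CompleteLattice β] (x y : β) : Prop :=
  ∀ (I : Type v) [LinearOrder I] [Nonempty I] (f g : I → β),
    (∀ i, f i ⋖ g i) →
    (∀ i, ProjEquiv (f i, g i) (x, y)) →
    (∀ i j : I, i < j → TransUp (f j, g j) (f i, g i)) →
    (⨅ i, f i) ⋖ (⨅ i, g i)

section Helpers
variable {β : Type v} [Lattice β]

lemma transUp_dual_iff {p q : βᵒᵈ × βᵒᵈ} :
    TransUp p q ↔ TransUp (β := β)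
      (OrderDual.ofDual q.2, OrderDual.ofDual q.1) (OrderDual.ofDual p.2, OrderDual.ofDual p.1) := by
  constructor
  · rintro ⟨h1, h2, h3, h4⟩
    refine ⟨h2, h1, ?_, ?_⟩
    · show OrderDual.ofDual q.1 ⊓ OrderDual.ofDual p.2 = OrderDual.ofDual q.2
      rw [inf_comm]; exact h4
    · show OrderDual.ofDual q.1 ⊔ OrderDual.ofDual p.2 = OrderDual.ofDual p.1
      rw [sup_comm]; exact h3
  · rintro ⟨h1, h2, h3, h4⟩
    refine ⟨h2, h1, ?_, ?_⟩
    · show OrderDual.ofDual p.2 ⊔ OrderDual.ofDual q.1 = OrderDual.ofDual p.1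
      rw [sup_comm]; exact h4
    · show OrderDual.ofDual p.2 ⊓ OrderDual.ofDual q.1 = OrderDual.ofDual q.2
      rw [inf_comm]; exact h3

lemma projEquiv_dual {p q : βᵒᵈ × βᵒᵈ} (h : ProjEquiv p q) :
    ProjEquiv (β := β) (OrderDual.ofDual p.2, OrderDual.ofDual p.1)
      (OrderDual.ofDual q.2, OrderDual.ofDual q.1) := by
  induction h with
  | rel a b hab => exact Relation.EqvGen.symm _ _ (Relation.EqvGen.rel _ _ (transUp_dual_iff.mp hab))
  | refl a => exact Relation.EqvGen.refl _
  | symm a b _ ih => exact Relation.EqvGen.symm _ _ ih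
  | trans a b c _ _ ih1 ih2 => exact Relation.EqvGen.trans _ _ _ ih1 ih2

lemma projEquiv_toDual {p q : β × β} (h : ProjEquiv p q) :
    ProjEquiv (β := βᵒᵈ) (OrderDual.toDual p.2, OrderDual.toDual p.1)
      (OrderDual.toDual q.2, OrderDual.toDual q.1) := by
  induction h with
  | rel a b hab =>
      refine Relation.EqvGen.symm _ _ (Relation.EqvGen.rel _ _ ?_)
      exact transUp_dual_iff.mpr hab
  | refl a => exact Relation.EqvGen.refl _
  | symm a b _ ih => exact Relation.EqvGen.symm _ _ ih
  | trans a b c _ _ ih1 ih2 => exact Relation.EqvGen.trans _ _ _ ih1 ih2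

/-- transfer of maximal chains along `ofDual`. -/
lemma isMaxChain_dual {C : Set βᵒᵈ} (hC : IsMaxChain (· ≤ ·) C) :
    IsMaxChain (· ≤ ·) {a : β | OrderDual.toDual a ∈ C} := by
  constructor
  · intro a ha b hb hne
    rcases hC.1 ha hb (fun e => hne (congrArg OrderDual.ofDual e)) with h | h
    · exact Or.inr h
    · exact Or.inl h
  · intro s hs hsub
    have hs' : IsChain (· ≤ ·) {p : βᵒᵈ | OrderDual.ofDual p ∈ s} := by
      intro a ha b hb hne
      rcases hs ha hb (fun e => hne (congrArg OrderDual.toDual e)) with h | h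
      · exact Or.inr h
      · exact Or.inl h
    have hCs : C ⊆ {p : βᵒᵈ | OrderDual.ofDual p ∈ s} := fun p hp => hsub hp
    have := hC.2 hs' hCs
    ext a
    constructor
    · exact fun ha => hsub ha
    · intro ha
      show OrderDual.toDual a ∈ C
      rw [this]; exact ha

lemma covIn_dual_card (C : Set βᵒᵈ) (x y : β) :
    Cardinal.mk ↥(CovIn C (OrderDual.toDual y) (OrderDual.toDual x)) =
      Cardinal.mk ↥(CovIn {a : β | OrderDual.toDual a ∈ C} x y) := by
  refine Cardinal.mk_congr ⟨fun s => ⟨(OrderDual.ofDual s.1.2, OrderDual.ofDual s.1.1), ?_⟩,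
    fun s => ⟨(OrderDual.toDual s.1.2, OrderDual.toDual s.1.1), ?_⟩, ?_, ?_⟩
  · obtain ⟨⟨a, b⟩, h1, h2, h3, h4⟩ := s
    exact ⟨h2, h1, h3.ofDual, projEquiv_dual h4⟩
  · obtain ⟨⟨a, b⟩, h1, h2, h3, h4⟩ := s
    exact ⟨h2, h1, h3.toDual, projEquiv_toDual h4⟩
  · rintro ⟨⟨a, b⟩, h⟩; rfl
  · rintro ⟨⟨a, b⟩, h⟩; rfl
end Helpers

section Main
variable {α : Type u} [CompleteLattice α] [IsModularLattice α]

lemma transpose_cov {u v w : α} (huv : u ⋖ v) (h : v ⊓ w = u) : w ⋖ v ⊔ w :=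
  covBy_sup_of_inf_covBy_left (h ▸ huv)

lemma upper_main (x y : α) (hxy : x ⋖ y)
    (hwr : ∃ n : ℕ, ∀ C : Set α, IsMaxChain (· ≤ ·) C →
      Cardinal.mk ↥(CovIn C x y) = (n : Cardinal)) :
    UpperRegular x y := by
  classical
  intro I _ _ f g hcov hproj htrans
  set F := ⨆ i, f i with hFdef
  have hfF : ∀ i, f i ≤ F := le_iSup f
  have hFg : F ≤ ⨆ i, g i := iSup_mono fun i => (hcov i).le
  have htr1 : ∀ i j : I, i < j → g i ⊓ f j = f i := fun i j h => (htrans i j h).2.2.1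
  have htr2 : ∀ i j : I, i < j → g i ⊔ f j = g j := fun i j h => (htrans i j h).2.2.2
  have hfmono : ∀ i j : I, i ≤ j → f i ≤ f j := by
    intro i j hij
    rcases eq_or_lt_of_le hij with rfl | h
    · exact le_rfl
    · exact (htr1 i j h) ▸ inf_le_right
  have hgmono : ∀ i j : I, i ≤ j → g i ≤ g j := by
    intro i j hij
    rcases eq_or_lt_of_le hij with rfl | h
    · exact le_rfl
    · exact (htr2 i j h) ▸ le_sup_left
  by_cases hex : ∃ i, ¬ g i ≤ F
  · obtain ⟨i, hi⟩ := hex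
    have hfgi : F ⊓ g i = f i := by
      rcases (hcov i).wcovBy.eq_or_eq (le_inf (hfF i) (hcov i).le) inf_le_right with h | h
      · exact h
      · exact absurd (h ▸ inf_le_left) hi
    have hcovF : F ⋖ g i ⊔ F := transpose_cov (hcov i) (by rw [inf_comm]; exact hfgi)
    have hG : (⨆ j, g j) = g i ⊔ F := by
      refine le_antisymm (iSup_le fun j => ?_) (sup_le (le_iSup g i) hFg)
      rcases le_total j i with h | h
      · exact le_sup_of_le_left (hgmono j i h)
      · rcases eq_or_lt_of_le h with rfl | h
        · exact le_sup_left
        · rw [← htr2 i j h]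
          exact sup_le le_sup_left (le_sup_of_le_right (hfF j))
    rw [hG]; exact hcovF
  · -- contradiction branch : every g i lies below F
    exfalso
    push_neg at hex
    obtain ⟨n, hn⟩ := hwr
    have i0 : I := Classical.arbitrary I
    set u0 := f i0 with hu0
    set v0 := g i0 with hv0
    have hu0v0 : u0 ⋖ v0 := hcov i0
    have hv0F : v0 ≤ F := hex i0
    have hgf : ∀ j, ¬ v0 ≤ f j := by
      intro j hle
      rcases lt_trichotomy i0 j with h | rfl | h
      · have h3 := htr1 i0 j h
        have h4 : g i0 ≤ g i0 ⊓ f j := le_inf le_rfl hle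
        rw [h3] at h4
        exact hu0v0.lt.not_ge h4
      · exact hu0v0.lt.not_ge hle
      · exact hu0v0.lt.not_ge (hle.trans (hfmono j i0 h.le))
    -- base maximal chain through all the f j and F
    have hS : IsChain (· ≤ ·) (Set.range f ∪ {F}) := by
      rintro a (⟨i, rfl⟩ | rfl) b (⟨j, rfl⟩ | rfl) hne
      · rcases le_total i j with h | h
        · exact Or.inl (hfmono i j h)
        · exact Or.inr (hfmono j i h)
      · exact Or.inl (hfF i)
      · exact Or.inr (hfF j)
      · exact absurd rfl hne
    obtain ⟨M, hM, hSM⟩ := hS.exists_maxChain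
    have hfM : ∀ i, f i ∈ M := fun i => hSM (Or.inl ⟨i, rfl⟩)
    have hFM : F ∈ M := hSM (Or.inr rfl)
    have hMtot : ∀ a ∈ M, ∀ b ∈ M, a ≤ b ∨ b ≤ a := fun a ha b hb => hM.1.total ha hb
    -- the surgery chain
    set M2 : Set α :=
      {c | c ∈ M ∧ c ≤ u0} ∪ (fun c => c ⊔ v0) '' {c | c ∈ M ∧ u0 ≤ c ∧ c ≤ F}
        ∪ {c | c ∈ M ∧ F ≤ c} with hM2def
    have hM2chain : IsChain (· ≤ ·) M2 := by
      have key : ∀ a ∈ M2, ∀ b ∈ M2, a ≤ b ∨ b ≤ a := by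
        rintro a ((⟨haM, ha1⟩ | ⟨c, ⟨hcM, hc1, hc2⟩, rfl⟩) | ⟨haM, ha1⟩)
            b ((⟨hbM, hb1⟩ | ⟨d, ⟨hdM, hd1, hd2⟩, rfl⟩) | ⟨hbM, hb1⟩)
        · exact hMtot a haM b hbM
        · exact Or.inl (ha1.trans ((hu0v0.le.trans le_sup_right)))
        · exact Or.inl (ha1.trans ((hfF i0).trans hb1))
        · exact Or.inr (hb1.trans (hu0v0.le.trans le_sup_right))
        · rcases hMtot c hcM d hdM with h | h
          · exact Or.inl (sup_le_sup_right h v0)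
          · exact Or.inr (sup_le_sup_right h v0)
        · exact Or.inl ((sup_le hc2 hv0F).trans hb1)
        · exact Or.inr (hb1.trans ((hfF i0).trans ha1))
        · exact Or.inr ((sup_le hd2 hv0F).trans ha1)
        · exact hMtot a haM b hbM
      exact fun a ha b hb _ => key a ha b hb
    obtain ⟨N, hN, hM2N⟩ := hM2chain.exists_maxChain
    have hlowN : ∀ c ∈ M, c ≤ u0 → c ∈ N := fun c h1 h2 =>
      hM2N (Or.inl (Or.inl ⟨h1, h2⟩))
    have hmidN : ∀ c ∈ M, u0 ≤ c → c ≤ F → c ⊔ v0 ∈ N := fun c h1 h2 h3 =>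
      hM2N (Or.inl (Or.inr ⟨c, ⟨h1, h2, h3⟩, rfl⟩))
    have hupN : ∀ c ∈ M, F ≤ c → c ∈ N := fun c h1 h2 => hM2N (Or.inr ⟨h1, h2⟩)
    have hu0N : u0 ∈ N := hlowN u0 (hfM i0) le_rfl
    have hv0N : v0 ∈ N := by
      have := hmidN u0 (hfM i0) le_rfl (hfF i0)
      rwa [sup_eq_right.mpr hu0v0.le] at this
    -- structure of covers of M which get moved
    have structure_lemma : ∀ u v : α, (u, v) ∈ CovIn M x y →
        ¬ v ≤ u0 → ¬ F ≤ u → ¬ v0 ≤ u →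
        u0 ≤ u ∧ u ≤ F ∧ v ≤ F ∧ ¬ v0 ≤ v := by
      rintro u v ⟨huM, hvM, huv, -⟩ h1 h2 h3
      have hu0u : u0 ≤ u := by
        rcases hMtot u0 (hfM i0) u huM with h | h
        · exact h
        · have hu0v : u0 ≤ v := by
            rcases hMtot u0 (hfM i0) v hvM with h' | h'
            · exact h'
            · exact absurd h' h1
          rcases huv.wcovBy.eq_or_eq h hu0v with h' | h'
          · exact h'.le
          · exact absurd h'.ge h1
      have huF : u ≤ F := by
        rcases hMtot u huM F hFM with h | h
        · exact h
        · exact absurd h h2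
      have hvF : v ≤ F := by
        rcases hMtot v hvM F hFM with h | h
        · exact h
        · rcases huv.wcovBy.eq_or_eq huF h with h' | h'
          · exact absurd h'.le h2
          · exact h'.ge
      refine ⟨hu0u, huF, hvF, ?_⟩
      intro hv0v
      apply h2
      rw [hFdef]
      apply iSup_le
      intro j
      rcases hMtot (f j) (hfM j) u huM with h | h
      · exact h
      · rcases hMtot (f j) (hfM j) v hvM with h' | h'
        · rcases huv.wcovBy.eq_or_eq h h' with e | e
          · exact e.le
          · exact absurd (hv0v.trans e.ge) (hgf j)
        · exact absurd (hv0v.trans h') (hgf j)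
    have moved_lemma : ∀ u v : α, (u, v) ∈ CovIn M x y →
        ¬ v ≤ u0 → ¬ F ≤ u → ¬ v0 ≤ u →
        v ⊓ (u ⊔ v0) = u ∧ (u ⊔ v0) ⋖ (v ⊔ v0) := by
      rintro u v hp h1 h2 h3
      obtain ⟨hu0u, huF, hvF, hv0v⟩ := structure_lemma u v hp h1 h2 h3
      obtain ⟨huM, hvM, huv, -⟩ := hp
      have hvv0 : v ⊓ v0 = u0 := by
        rcases hu0v0.wcovBy.eq_or_eq (le_inf (hu0u.trans huv.le) hu0v0.le) inf_le_right with h | h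
        · exact h
        · exact absurd (h.symm.le.trans inf_le_left) hv0v
      have hmeet : v ⊓ (u ⊔ v0) = u := by
        rw [inf_comm, sup_inf_assoc_of_le _ huv.le, inf_comm v0 v, hvv0,
          sup_eq_left.mpr hu0u]
      have hcd : (u ⊔ v0) ⋖ (v ⊔ (u ⊔ v0)) := transpose_cov huv hmeet
      have heq : v ⊔ (u ⊔ v0) = v ⊔ v0 := by
        rw [← sup_assoc, sup_eq_left.mpr huv.le]
      exact ⟨hmeet, heq ▸ hcd⟩
    -- the map on coverings
    set φm : α × α → α × α := fun p =>
      if p.2 ≤ u0 ∨ F ≤ p.1 ∨ v0 ≤ p.1 then p else (p.1 ⊔ v0, p.2 ⊔ v0) with hφm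
    have φpos : ∀ p : α × α, (p.2 ≤ u0 ∨ F ≤ p.1 ∨ v0 ≤ p.1) → φm p = p :=
      fun p h => if_pos h
    have φneg : ∀ p : α × α, ¬ (p.2 ≤ u0 ∨ F ≤ p.1 ∨ v0 ≤ p.1) →
        φm p = (p.1 ⊔ v0, p.2 ⊔ v0) := fun p h => if_neg h
    have mem_target : ∀ p ∈ CovIn M x y, φm p ∈ CovIn N x y := by
      rintro ⟨u, v⟩ hp
      obtain ⟨huM, hvM, huv, hpe⟩ := hp
      by_cases hcond : v ≤ u0 ∨ F ≤ u ∨ v0 ≤ u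
      · have : φm (u, v) = (u, v) := if_pos hcond
        rw [this]
        refine ⟨?_, ?_, huv, hpe⟩ <;> rcases hcond with h | h | h
        · exact hlowN u huM (huv.le.trans h)
        · exact hupN u huM h
        · -- v0 ≤ u ; u ≤ F or F ≤ u
          rcases hMtot u huM F hFM with h' | h'
          · have := hmidN u huM ((hu0v0.le.trans h)) h'
            rwa [sup_eq_left.mpr h] at this
          · exact hupN u huM h'
        · exact hlowN v hvM h
        · exact hupN v hvM (h.trans huv.le)
        · rcases hMtot v hvM F hFM with h' | h'
          · have := hmidN v hvM (hu0v0.le.trans (h.trans huv.le)) h'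
            rwa [sup_eq_left.mpr (h.trans huv.le)] at this
          · exact hupN v hvM h'
      · push_neg at hcond
        obtain ⟨h1, h2, h3⟩ := hcond
        have : φm (u, v) = (u ⊔ v0, v ⊔ v0) := if_neg (by push_neg; exact ⟨h1, h2, h3⟩)
        rw [this]
        obtain ⟨hu0u, huF, hvF, hv0v⟩ := structure_lemma u v ⟨huM, hvM, huv, hpe⟩ h1 h2 h3
        obtain ⟨hmeet, hcd⟩ := moved_lemma u v ⟨huM, hvM, huv, hpe⟩ h1 h2 h3
        refine ⟨hmidN u huM hu0u huF, hmidN v hvM (hu0u.trans huv.le) hvF, hcd, ?_⟩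
        · -- projective equivalence of the image
          have htu : TransUp (u, v) (u ⊔ v0, v ⊔ v0) := by
            refine ⟨huv.le, sup_le_sup_right huv.le v0, hmeet, ?_⟩
            show v ⊔ (u ⊔ v0) = v ⊔ v0
            rw [← sup_assoc, sup_eq_left.mpr huv.le]
          exact Relation.EqvGen.trans _ _ _
            (Relation.EqvGen.symm _ _ (Relation.EqvGen.rel _ _ htu)) hpe
    have hnew : (u0, v0) ∈ CovIn N x y := ⟨hu0N, hv0N, hu0v0, hproj i0⟩
    have hne_new : ∀ p ∈ CovIn M x y, φm p ≠ (u0, v0) := by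
      rintro ⟨u, v⟩ hp heq
      by_cases hcond : v ≤ u0 ∨ F ≤ u ∨ v0 ≤ u
      · rw [φpos (u, v) hcond] at heq
        simp only [Prod.mk.injEq] at heq
        obtain ⟨rfl, rfl⟩ := heq
        rcases hcond with h | h | h
        · exact hu0v0.lt.not_ge h
        · exact hu0v0.lt.not_ge (hv0F.trans h)
        · exact hu0v0.lt.not_ge h
      · rw [φneg (u, v) hcond] at heq
        simp only [Prod.mk.injEq] at heq
        exact hu0v0.lt.not_ge (heq.1 ▸ le_sup_right)
    -- injectivity
    have cov_unique : ∀ a b b' : α, a ⋖ b → a ⋖ b' → b ∈ M → b' ∈ M → b = b' := by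
      intro a b b' h h' hb hb'
      rcases hMtot b hb b' hb' with hle | hle
      · rcases eq_or_lt_of_le hle with e | e
        · exact e
        · exact absurd e (h'.2 h.lt)
      · rcases eq_or_lt_of_le hle with e | e
        · exact e.symm
        · exact absurd e (h.2 h'.lt)
    have hinj : ∀ p ∈ CovIn M x y, ∀ q ∈ CovIn M x y, φm p = φm q → p = q := by
      -- auxiliary: a moved pair's image never coincides with an unmoved pair
      have mixed : ∀ p ∈ CovIn M x y, ∀ q ∈ CovIn M x y,
          (p.2 ≤ u0 ∨ F ≤ p.1 ∨ v0 ≤ p.1) →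
          ¬ (q.2 ≤ u0 ∨ F ≤ q.1 ∨ v0 ≤ q.1) → p ≠ (q.1 ⊔ v0, q.2 ⊔ v0) := by
        rintro ⟨u, v⟩ hp ⟨u', v'⟩ hq hcp hcq heq
        push_neg at hcq
        obtain ⟨h1, h2, h3⟩ := hcq
        obtain ⟨hu0u', huF', hvF', hv0v'⟩ := structure_lemma u' v' hq h1 h2 h3
        obtain ⟨hmeet, -⟩ := moved_lemma u' v' hq h1 h2 h3
        simp only [Prod.mk.injEq] at heq
        obtain ⟨rfl, rfl⟩ := heq
        -- now u = u' ⊔ v0, v = v' ⊔ v0, and (u,v) unmoved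
        have hv0u : v0 ≤ u' ⊔ v0 := le_sup_right
        rcases hMtot v' hq.2.1 (u' ⊔ v0) hp.1 with h | h
        · have : v' = u' := by rw [← hmeet]; exact le_antisymm (le_inf le_rfl h) inf_le_left
          exact hq.2.2.1.lt.ne' this
        · exact hv0v' (hv0u.trans h)
      rintro p hp q hq heq
      by_cases hcp : p.2 ≤ u0 ∨ F ≤ p.1 ∨ v0 ≤ p.1 <;>
        by_cases hcq : q.2 ≤ u0 ∨ F ≤ q.1 ∨ v0 ≤ q.1
      · rwa [φpos p hcp, φpos q hcq] at heq
      · rw [φpos p hcp, φneg q hcq] at heq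
        exact absurd heq (mixed p hp q hq hcp hcq)
      · rw [φneg p hcp, φpos q hcq] at heq
        exact absurd heq.symm (mixed q hq p hp hcq hcp)
      · -- both moved
        rw [φneg p hcp, φneg q hcq] at heq
        simp only [Prod.mk.injEq] at heq
        obtain ⟨e1, e2⟩ := heq
        push_neg at hcp hcq
        obtain ⟨hp1, hp2, hp3⟩ := hcp
        obtain ⟨hq1, hq2, hq3⟩ := hcq
        obtain ⟨hmp, -⟩ := moved_lemma p.1 p.2 (by exact hp) hp1 hp2 hp3
        obtain ⟨hmq, -⟩ := moved_lemma q.1 q.2 (by exact hq) hq1 hq2 hq3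
        obtain ⟨hpM1, hpM2, hpcov, -⟩ := hp
        obtain ⟨hqM1, hqM2, hqcov, -⟩ := hq
        -- first components are equal
        have e0 : p.1 = q.1 := by
          by_contra hne
          rcases hMtot p.1 hpM1 q.1 hqM1 with h | h
          · have hlt : p.1 < q.1 := lt_of_le_of_ne h hne
            have hle : p.2 ≤ q.1 := by
              rcases hMtot p.2 hpM2 q.1 hqM1 with h' | h'
              · exact h'
              · rcases eq_or_lt_of_le h' with e | e
                · exact e.ge
                · exact absurd hlt fun hlt => hpcov.2 hlt e
            have : p.2 ≤ p.1 ⊔ v0 := by rw [e1]; exact le_sup_of_le_left hle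
            have : p.2 = p.1 := by
              rw [← hmp]; exact le_antisymm (le_inf le_rfl this) inf_le_left
            exact hpcov.lt.ne' this
          · have hlt : q.1 < p.1 := lt_of_le_of_ne h (Ne.symm hne)
            have hle : q.2 ≤ p.1 := by
              rcases hMtot q.2 hqM2 p.1 hpM1 with h' | h'
              · exact h'
              · rcases eq_or_lt_of_le h' with e | e
                · exact e.ge
                · exact absurd hlt fun hlt => hqcov.2 hlt e
            have : q.2 ≤ q.1 ⊔ v0 := by rw [← e1]; exact le_sup_of_le_left hle
            have : q.2 = q.1 := by
              rw [← hmq]; exact le_antisymm (le_inf le_rfl this) inf_le_left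
            exact hqcov.lt.ne' this
        have e0' : p.2 = q.2 :=
          cov_unique p.1 p.2 q.2 hpcov (e0 ▸ hqcov) hpM2 hqM2
        exact Prod.ext e0 e0'
    -- counting
    have hMcard := hn M hM
    have hNcard := hn N hN
    have finM : Finite ↥(CovIn M x y) := by
      rw [← Cardinal.mk_lt_aleph0_iff, hMcard]; exact Cardinal.nat_lt_aleph0 n
    have finN : Finite ↥(CovIn N x y) := by
      rw [← Cardinal.mk_lt_aleph0_iff, hNcard]; exact Cardinal.nat_lt_aleph0 n
    let Ψ : ↥(CovIn M x y) ⊕ PUnit.{u+1} → ↥(CovIn N x y) := fun s =>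
      match s with
      | Sum.inl ⟨p, hp⟩ => ⟨φm p, mem_target p hp⟩
      | Sum.inr _ => ⟨(u0, v0), hnew⟩
    have hΨ : Function.Injective Ψ := by
      rintro (⟨p, hp⟩ | ⟨⟩) (⟨q, hq⟩ | ⟨⟩) h <;>
        simp only [Ψ, Subtype.mk.injEq] at h
      · exact congrArg Sum.inl (Subtype.ext (hinj p hp q hq h))
      · exact absurd h (hne_new p hp)
      · exact absurd h.symm (hne_new q hq)
      · rfl
    have hcard1 : Nat.card ↥(CovIn M x y) = n := by
      have : (Cardinal.mk ↥(CovIn M x y)).toNat = n := by rw [hMcard]; simp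
      simpa [Nat.card] using this
    have hcard2 : Nat.card ↥(CovIn N x y) = n := by
      have : (Cardinal.mk ↥(CovIn N x y)).toNat = n := by rw [hNcard]; simp
      simpa [Nat.card] using this
    have hle := Nat.card_le_card_of_injective Ψ hΨ
    rw [Nat.card_sum, hcard1, hcard2] at hle
    simp only [Nat.card_unique] at hle
    omega
end Main

section Final
variable {α : Type u} [CompleteLattice α] [IsModularLattice α]

lemma lower_main (x y : α) (hxy : x ⋖ y)
    (hwr : ∃ n : ℕ, ∀ C : Set α, IsMaxChain (· ≤ ·) C →
      Cardinal.mk ↥(CovIn C x y) = (n : Cardinal)) :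
    LowerRegular x y := by
  obtain ⟨n, hn⟩ := hwr
  have hwr' : ∃ n : ℕ, ∀ C : Set αᵒᵈ, IsMaxChain (· ≤ ·) C →
      Cardinal.mk ↥(CovIn C (OrderDual.toDual y) (OrderDual.toDual x)) = (n : Cardinal) := by
    refine ⟨n, fun C hC => ?_⟩
    rw [covIn_dual_card C x y]
    exact hn _ (isMaxChain_dual hC)
  have H := upper_main (α := αᵒᵈ) (OrderDual.toDual y) (OrderDual.toDual x) hxy.toDual hwr'
  intro I _ _ f g hcov hproj htrans
  have key := H I (fun i => OrderDual.toDual (g i)) (fun i => OrderDual.toDual (f i))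
    (fun i => (hcov i).toDual)
    (fun i => projEquiv_toDual (hproj i))
    (fun i j hij => transUp_dual_iff.mpr (htrans i j hij))
  rw [show (⨆ i, (fun i => OrderDual.toDual (g i)) i) = OrderDual.toDual (⨅ i, g i) from
      (toDual_iInf g).symm,
    show (⨆ i, (fun i => OrderDual.toDual (f i)) i) = OrderDual.toDual (⨅ i, f i) from
      (toDual_iInf f).symm] at key
  exact toDual_covBy_toDual_iff.mp key

theorem stmt2 {α : Type u} [CompleteLattice α] [IsModularLattice α]
    (x y : α) (hxy : x ⋖ y)
    (hwr : ∃ n : ℕ, ∀ C : Set α, IsMaxChain (· ≤ ·) C →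
      Cardinal.mk ↥(CovIn C x y) = (n : Cardinal)) :
    UpperRegular x y ∧ LowerRegular x y :=
  ⟨upper_main x y hxy hwr, lower_main x y hxy hwr⟩

end Final
end

section
/- In any complete meet-continuous modular lattice, every covering is upper regular. -/
universe u v

/-!
Let `F = ⨆ i, f i` and `G = ⨆ i, g i` for an increasing chain of coverings `f i ⋖ g i`, each
transposing up to the later ones. Meet-continuity gives `g i ⊓ F = ⨆ j, g i ⊓ f j = f i`, so
`F < G`. If `F < z < G`, then either `z` lies above some `g i`, hence above every later
`g j = g i ⊔ f j` and so above `G`; or `z ⊓ g i = f i` for all `i` by the covering, and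
meet-continuity again gives `z = ⨆ i, z ⊓ g i = F`.
-/

variable {α : Type*} [CompleteLattice α]

theorem MeetContinuous.inf_iSup_eq_of_directed (hmc : MeetContinuous α) {ι : Type*}
    {f : ι → α} (hf : Directed (· ≤ ·) f) (a : α) :
    a ⊓ ⨆ i, f i = ⨆ i, a ⊓ f i := by
  rw [← sSup_range, hmc a _ (directedOn_range.mpr hf), iSup_range]

section TransUpChain

variable {ι : Type*} [LinearOrder ι] {f g : ι → α}
  (htrans : ∀ i j, i < j → TransUp (f i, g i) (f j, g j))
include htrans

theorem monotone_fst_of_transUp : Monotone f :=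
  monotone_iff_forall_lt.mpr fun i j hij => (htrans i j hij).2.2.1.symm.trans_le inf_le_right

theorem monotone_snd_of_transUp : Monotone g :=
  monotone_iff_forall_lt.mpr fun i j hij => le_sup_left.trans_eq (htrans i j hij).2.2.2

theorem inf_iSup_fst_of_transUp (hmc : MeetContinuous α) (hfg : ∀ i, f i ≤ g i) (i : ι) :
    g i ⊓ ⨆ j, f j = f i := by
  rw [hmc.inf_iSup_eq_of_directed (monotone_fst_of_transUp htrans).directed_le]
  refine le_antisymm (iSup_le fun j => ?_) (le_iSup_of_le i (le_inf (hfg i) le_rfl))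
  rcases le_or_gt j i with hji | hij
  · exact inf_le_right.trans (monotone_fst_of_transUp htrans hji)
  · exact (htrans i j hij).2.2.1.le

theorem iSup_snd_le_of_transUp {z : α} (hF : ⨆ j, f j ≤ z) {i : ι} (hi : g i ≤ z) :
    ⨆ j, g j ≤ z := by
  refine iSup_le fun j => ?_
  rcases le_or_gt j i with hji | hij
  · exact (monotone_snd_of_transUp htrans hji).trans hi
  · exact (htrans i j hij).2.2.2.symm.trans_le (sup_le hi ((le_iSup f j).trans hF))

theorem covBy_iSup_of_transUp (hmc : MeetContinuous α) [Nonempty ι]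
    (hcov : ∀ i, f i ⋖ g i) : (⨆ i, f i) ⋖ ⨆ i, g i := by
  have hmeet := inf_iSup_fst_of_transUp htrans hmc fun i => (hcov i).le
  refine ⟨lt_of_le_of_ne (iSup_mono fun i => (hcov i).le) fun hFG => ?_, fun z hFz hzG => ?_⟩
  · obtain ⟨i⟩ := ‹Nonempty ι›
    exact (hcov i).lt.ne' (by rw [← hmeet i, hFG, inf_eq_left.mpr (le_iSup g i)])
  by_cases hex : ∃ i, g i ≤ z
  · obtain ⟨i, hi⟩ := hex
    exact hzG.not_ge (iSup_snd_le_of_transUp htrans hFz.le hi)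
  have hzg : ∀ i, z ⊓ g i = f i := fun i =>
    ((hcov i).eq_or_eq (le_inf ((le_iSup f i).trans hFz.le) (hcov i).le) inf_le_right).resolve_right
      fun h => hex ⟨i, h ▸ inf_le_left⟩
  refine hFz.ne' ?_
  calc z = z ⊓ ⨆ i, g i := (inf_eq_left.mpr hzG.le).symm
    _ = ⨆ i, z ⊓ g i :=
      hmc.inf_iSup_eq_of_directed (monotone_snd_of_transUp htrans).directed_le z
    _ = ⨆ i, f i := by simp only [hzg]

end TransUpChain

theorem stmt3_general {α : Type u} [CompleteLattice α]
    (hmc : MeetContinuous α) (x y : α) : UpperRegular x y :=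
  fun _ _ _ _ _ hcov _ htrans => covBy_iSup_of_transUp htrans hmc hcov

theorem stmt3 {α : Type u} [CompleteLattice α] [IsModularLattice α]
    (hmc : MeetContinuous α) (x y : α) (hxy : x ⋖ y) : UpperRegular x y :=
  stmt3_general hmc x y
end
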